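/- arXiv:0908.0096 — 5 statements merged into one kernel-verified Lean document; each statement's English description precedes it below -/
import Mathlib

section
/- Let A be a commutative ring, B a commutative A-algebra, F a finitely presented B-module, and G a B-module which, as an A-module, is finitely generated and projective. Then there exist a finitely presented A-module N and a B-module homomorphism χ : F → G ⊗_A N such that for every A-module M the map Hom_A(N, M) → Hom_B(F, G ⊗_A M) sending g to (id_G ⊗ g) ∘ χ is bijective. In other words, the functor M ↦ Hom_B(F, G ⊗_A M) on A-modules is corepresented by the finitely presented A-module N. -/
/-!
Take `N = G^∨ ⊗_B F`, where `G^∨ = Hom_A(G, A)` is a `B`-module through the action of `B` on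
`G`. A finite dual basis `(e_i, e_i^∨)` of the finitely generated projective `A`-module `G` gives
`χ f = ∑ e_i ⊗ (e_i^∨ ⊗ f)`; it is `B`-linear because `∑ b e_i ⊗ e_i^∨ = ∑ e_i ⊗ e_i^∨ ∘ b`
in `G ⊗_A G^∨`. The inverse of `g ↦ (id ⊗ g) ∘ χ` sends `ψ` to `d ⊗ f ↦ ⟨d, ψ f⟩`, the
contraction of `ψ f ∈ G ⊗_A M` against `d`. Tensoring a finite presentation of `F` with the
finitely presented `A`-module `G^∨` shows that `N` is finitely presented.
-/

open TensorProduct Module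

namespace TensorProduct

variable {R S M N P : Type*} [CommSemiring R] [CommSemiring S] [Algebra R S]
  [AddCommMonoid M] [Module R M] [Module S M] [IsScalarTower R S M]
  [AddCommMonoid N] [Module R N] [Module S N] [AddCommMonoid P] [Module R P]

/-- Unlike `TensorProduct.lift`, the target need not be an `S`-module. -/
def liftBalanced (f : M →ₗ[R] N →ₗ[R] P) (hf : ∀ (s : S) m n, f (s • m) n = f m (s • n)) :
    M ⊗[S] N →ₗ[R] P where
  toAddHom := (liftAddHom (LinearMap.toAddMonoidHom'.comp f.toAddMonoidHom) hf).toAddHom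
  map_smul' r x := by
    induction x with
    | zero => simp
    | tmul m n => simp [smul_tmul', LinearMap.toAddMonoidHom']
    | add x y hx hy => simp_all

end TensorProduct

section FinitePresentation

variable {A B D : Type*} [CommRing A] [CommRing B] [Algebra A B]
  [AddCommGroup D] [Module A D] [Module B D] [IsScalarTower A B D]

theorem Module.Finite.tensorProduct_of_tower {K : Type*} [AddCommGroup K] [Module B K]
    [Module.Finite A D] [Module.Finite B K] : Module.Finite A (D ⊗[B] K) := by
  obtain ⟨n, f, hf⟩ := Module.Finite.exists_fin' B K
  exact .of_surjective (((f.lTensor D).restrictScalars A) ∘ₗ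
      ((TensorProduct.piScalarRight B B D (Fin n)).restrictScalars A).symm.toLinearMap)
    ((LinearMap.lTensor_surjective D hf).comp (LinearEquiv.surjective _))

theorem Module.FinitePresentation.tensorProduct_of_tower {F : Type*} [AddCommGroup F]
    [Module B F] [Module.FinitePresentation A D] [Module.FinitePresentation B F] :
    Module.FinitePresentation A (D ⊗[B] F) := by
  obtain ⟨n, f, hf⟩ := Module.Finite.exists_fin' B F
  have : Module.FinitePresentation A (D ⊗[B] (Fin n → B)) :=
    .of_equiv ((TensorProduct.piScalarRight B B D (Fin n)).restrictScalars A).symm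
  have : Module.Finite B (LinearMap.ker f) :=
    .of_fg (Module.FinitePresentation.fg_ker (R := B) f hf)
  have : Module.Finite A (D ⊗[B] LinearMap.ker f) := .tensorProduct_of_tower (B := B)
  refine Module.finitePresentation_of_surjective ((f.lTensor D).restrictScalars A)
    (LinearMap.lTensor_surjective D hf) ?_
  have hexact : Function.Exact ((LinearMap.ker f).subtype.lTensor D) (f.lTensor D) :=
    lTensor_exact D f.exact_subtype_ker_map hf
  rw [LinearMap.ker_restrictScalars, LinearMap.exact_iff.mp hexact]
  exact Submodule.fg_range (((LinearMap.ker f).subtype.lTensor D).restrictScalars A)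

end FinitePresentation

/-- The `A`-dual of `G`, on which `B` acts through `G`: `(b • d) g = d (b • g)`. -/
def DomDual (A _B G : Type*) [CommRing A] [AddCommGroup G] [Module A G] : Type _ := Dual A G

namespace DomDual

section Ring

variable {A B G : Type*} [CommRing A] [AddCommGroup G] [Module A G]

instance : AddCommGroup (DomDual A B G) := inferInstanceAs (AddCommGroup (Dual A G))

instance : Module A (DomDual A B G) := inferInstanceAs (Module A (Dual A G))

instance [Module.Finite A G] [Module.Projective A G] : Module.Finite A (DomDual A B G) :=
  inferInstanceAs (Module.Finite A (Dual A G))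

instance [Module.Finite A G] [Module.Projective A G] : Module.Projective A (DomDual A B G) :=
  inferInstanceAs (Module.Projective A (Dual A G))

variable (A B G) in
def dualEquiv : DomDual A B G ≃ₗ[A] Dual A G := LinearEquiv.refl A (Dual A G)

end Ring

variable {A B G : Type*} [CommRing A] [CommRing B] [Algebra A B]
  [AddCommGroup G] [Module A G] [Module B G] [IsScalarTower A B G]

instance : Module B (DomDual A B G) :=
  Module.compHom (R := Bᵈᵐᵃ) (Dual A G) ((RingEquiv.toOpposite B).toRingHom : B →+* Bᵈᵐᵃ)

theorem dualEquiv_smul (b : B) (d : DomDual A B G) (g : G) :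
    dualEquiv A B G (b • d) g = dualEquiv A B G d (b • g) :=
  rfl

instance : IsScalarTower A B (DomDual A B G) :=
  ⟨fun a b d => (dualEquiv A B G).injective <| LinearMap.ext fun g => by
    simp [dualEquiv_smul]⟩

end DomDual

section Contract

variable {A G : Type*} [CommRing A] [AddCommGroup G] [Module A G]

variable (A G) in
def dualContract (M : Type*) [AddCommGroup M] [Module A M] :
    Dual A G →ₗ[A] G ⊗[A] M →ₗ[A] M :=
  LinearMap.llcomp A _ _ _ (TensorProduct.lid A M).toLinearMap ∘ₗ LinearMap.rTensorHom M

@[simp]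
theorem dualContract_tmul {M : Type*} [AddCommGroup M] [Module A M] (d : Dual A G) (g : G)
    (m : M) : dualContract A G M d (g ⊗ₜ m) = d g • m := by
  simp [dualContract]

end Contract

namespace DomDual

variable {A B G : Type*} [CommRing A] [CommRing B] [Algebra A B]
  [AddCommGroup G] [Module A G] [Module B G] [IsScalarTower A B G]

theorem dualContract_dualEquiv_smul {M : Type*} [AddCommGroup M] [Module A M] (b : B)
    (d : DomDual A B G) (z : G ⊗[A] M) :
    dualContract A G M (dualEquiv A B G (b • d)) z =
      dualContract A G M (dualEquiv A B G d) (b • z) := by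
  induction z with
  | zero => simp
  | tmul g m => rw [smul_tmul', dualContract_tmul, dualContract_tmul, dualEquiv_smul]
  | add x y hx hy => simp only [map_add, smul_add, hx, hy]

variable (A B G) in
def pairing (M : Type*) [AddCommGroup M] [Module A M] :
    DomDual A B G ⊗[B] (G ⊗[A] M) →ₗ[A] M :=
  liftBalanced (dualContract A G M ∘ₗ (dualEquiv A B G).toLinearMap) dualContract_dualEquiv_smul

@[simp]
theorem pairing_tmul {M : Type*} [AddCommGroup M] [Module A M] (d : DomDual A B G)
    (z : G ⊗[A] M) : pairing A B G M (d ⊗ₜ z) = dualContract A G M (dualEquiv A B G d) z :=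
  rfl

end DomDual

namespace Module

section DualBasis

variable {A G : Type*} [CommRing A] [AddCommGroup G] [Module A G]

def IsDualBasis {ι : Type*} [Fintype ι] (e : ι → G) (e' : ι → Dual A G) : Prop :=
  ∀ g, ∑ i, e' i g • e i = g

theorem exists_isDualBasis [Module.Finite A G] [Module.Projective A G] :
    ∃ (n : ℕ) (e : Fin n → G) (e' : Fin n → Dual A G), IsDualBasis e e' := by
  obtain ⟨n, π, s, -, -, hπs⟩ := Module.Finite.exists_comp_eq_id_of_projective A G
  refine ⟨n, fun i => π (Pi.single i 1), fun i => LinearMap.proj i ∘ₗ s, fun g => ?_⟩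
  calc ∑ i, s g i • π (Pi.single i 1) = π (∑ i, s g i • Pi.single i 1) := by
        simp only [map_sum, map_smul]
    _ = g := by rw [← pi_eq_sum_univ', ← LinearMap.comp_apply, hπs, LinearMap.id_apply]

namespace IsDualBasis

variable {ι : Type*} [Fintype ι] {e : ι → G} {e' : ι → Dual A G}

theorem sum_apply_smul (h : IsDualBasis e e') (d : Dual A G) : ∑ i, d (e i) • e' i = d := by
  ext g
  simpa [map_sum, mul_comm] using congr_arg d (h g)

theorem sum_tmul_dualContract (h : IsDualBasis e e') {M : Type*} [AddCommGroup M] [Module A M]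
    (z : G ⊗[A] M) : ∑ i, e i ⊗ₜ dualContract A G M (e' i) z = z := by
  induction z with
  | zero => simp
  | tmul g m => simp_rw [dualContract_tmul, tmul_smul, smul_tmul', ← sum_tmul, h g]
  | add x y hx hy => simp [tmul_add, Finset.sum_add_distrib, hx, hy]

theorem sum_dualEquiv_apply_smul {B : Type*} (h : IsDualBasis e e') (d : DomDual A B G) :
    ∑ i, DomDual.dualEquiv A B G d (e i) • (DomDual.dualEquiv A B G).symm (e' i) = d :=
  (DomDual.dualEquiv A B G).injective <| by
    simpa [map_sum] using h.sum_apply_smul (DomDual.dualEquiv A B G d)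

end IsDualBasis

end DualBasis

namespace IsDualBasis

open DomDual

variable {A B G : Type*} [CommRing A] [CommRing B] [Algebra A B]
  [AddCommGroup G] [Module A G] [Module B G] [IsScalarTower A B G]
  {ι : Type*} [Fintype ι] {e : ι → G} {e' : ι → Dual A G}

theorem sum_smul_tmul_eq_sum_tmul_smul (h : IsDualBasis e e') {F : Type*} [AddCommGroup F] [Module B F]
    (b : B) (f : F) :
    ∑ i, (b • e i) ⊗ₜ[A] ((dualEquiv A B G).symm (e' i) ⊗ₜ[B] f) =
      ∑ i, e i ⊗ₜ[A] ((b • (dualEquiv A B G).symm (e' i)) ⊗ₜ[B] f) := by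
  have expand : ∀ i, (b • e i) ⊗ₜ[A] ((dualEquiv A B G).symm (e' i) ⊗ₜ[B] f) =
      ∑ j, e j ⊗ₜ[A] ((e' j (b • e i) • (dualEquiv A B G).symm (e' i)) ⊗ₜ[B] f) := fun i => by
    conv_lhs => rw [← h (b • e i)]
    simp only [sum_tmul, smul_tmul, smul_tmul']
  simp_rw [expand]
  rw [Finset.sum_comm]
  refine Finset.sum_congr rfl fun j _ => ?_
  rw [← tmul_sum, ← sum_tmul]
  congr 2
  conv_rhs => rw [← h.sum_dualEquiv_apply_smul (b • (dualEquiv A B G).symm (e' j))]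
  simp [dualEquiv_smul]

variable (B) in
def coevTensor (h : IsDualBasis e e') (F : Type*) [AddCommGroup F] [Module B F] :
    F →ₗ[B] G ⊗[A] (DomDual A B G ⊗[B] F) where
  toFun f := ∑ i, e i ⊗ₜ ((dualEquiv A B G).symm (e' i) ⊗ₜ f)
  map_add' f f' := by simp only [tmul_add, Finset.sum_add_distrib]
  map_smul' b f := by
    simp only [RingHom.id_apply, Finset.smul_sum, smul_tmul', h.sum_smul_tmul_eq_sum_tmul_smul, smul_tmul]

theorem coevTensor_apply (h : IsDualBasis e e') {F : Type*} [AddCommGroup F] [Module B F]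
    (f : F) : h.coevTensor B F f = ∑ i, e i ⊗ₜ ((dualEquiv A B G).symm (e' i) ⊗ₜ f) :=
  rfl

theorem bijective_map_comp_coevTensor (h : IsDualBasis e e') (F : Type*) [AddCommGroup F]
    [Module B F] (M : Type*) [AddCommGroup M] [Module A M] :
    Function.Bijective fun g : DomDual A B G ⊗[B] F →ₗ[A] M =>
      (AlgebraTensorModule.map (LinearMap.id : G →ₗ[B] G) g).comp (h.coevTensor B F) := by
  refine Function.bijective_iff_has_inverse.mpr
    ⟨fun ψ => pairing A B G M ∘ₗ (ψ.lTensor (DomDual A B G)).restrictScalars A,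
      fun g => LinearMap.ext fun x => ?_, fun ψ => LinearMap.ext fun f => ?_⟩
  · induction x with
    | zero => simp
    | tmul d f =>
      calc _ = ∑ i, dualEquiv A B G d (e i) • g ((dualEquiv A B G).symm (e' i) ⊗ₜ f) := by
            simp [coevTensor_apply, map_sum]
        _ = g ((∑ i, dualEquiv A B G d (e i) • (dualEquiv A B G).symm (e' i)) ⊗ₜ f) := by
            simp only [sum_tmul, map_sum, ← smul_tmul', map_smul]
        _ = g (d ⊗ₜ f) := by rw [h.sum_dualEquiv_apply_smul]
    | add x y hx hy => simp only [map_add, hx, hy]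
  · simp [coevTensor_apply, map_sum, h.sum_tmul_dualContract]

end IsDualBasis

end Module

/-- Let `A` be a commutative ring, `B` a commutative `A`-algebra, `F` a
finitely presented `B`-module, and `G` a `B`-module which, as an `A`-module, is finitely
generated and projective.  Then there exist a finitely presented `A`-module `N` and a
`B`-module homomorphism `χ : F → G ⊗[A] N` such that for every `A`-module `M` the map
`Hom_A(N, M) → Hom_B(F, G ⊗[A] M)`, `g ↦ (id_G ⊗ g) ∘ χ`, is bijective. -/
theorem stmt0 (A : Type u) (B : Type u) [CommRing A] [CommRing B] [Algebra A B]
    (F : Type u) [AddCommGroup F] [Module B F] [Module.FinitePresentation B F]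
    (G : Type u) [AddCommGroup G] [Module A G] [Module B G] [IsScalarTower A B G]
    [Module.Finite A G] [Module.Projective A G] :
    ∃ (N : Type u) (_ : AddCommGroup N) (_ : Module A N),
      Module.FinitePresentation A N ∧
      ∃ χ : F →ₗ[B] G ⊗[A] N,
        ∀ (M : Type u) [AddCommGroup M] [Module A M],
          Function.Bijective fun g : N →ₗ[A] M =>
            (TensorProduct.AlgebraTensorModule.map (LinearMap.id : G →ₗ[B] G) g).comp χ := by
  obtain ⟨n, e, e', h⟩ := Module.exists_isDualBasis (A := A) (G := G)
  have : Module.FinitePresentation A (DomDual A B G) := Module.finitePresentation_of_projective A _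
  exact ⟨DomDual A B G ⊗[B] F, inferInstance, inferInstance,
    Module.FinitePresentation.tensorProduct_of_tower, h.coevTensor B F,
    fun M _ _ => h.bijective_map_comp_coevTensor F M⟩
end

section
/- Let A be a commutative Artinian local ring with residue field κ. Let F and G be flat A-modules and u : F → G an A-linear map such that the induced map u ⊗ id_κ : F ⊗_A κ → G ⊗_A κ is injective. Then u is injective and the cokernel of u is a flat A-module. -/
/-!
The maximal ideal `𝔪` of `A` is nilpotent, so Nakayama's lemma holds for arbitrary (not
necessarily finite) `A`-modules. Hence for a flat `A`-module `M`, any lift of a `κ`-basis of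
`κ ⊗ M` is an `A`-basis of `M`: it is linearly independent by flatness and spans by Nakayama.
In particular `F` is free. Since `u ⊗ κ` is injective, the image under `u` of a basis of `F`
stays linearly independent modulo `𝔪`; extending it to a `κ`-basis of `κ ⊗ G` and lifting
gives a basis of `G` containing `u` of a basis of `F`. So `u` is injective and its cokernel is free
on the remaining basis vectors.
-/

open Function TensorProduct IsLocalRing Module

theorem Module.Basis.sumExtend_apply_inl {K V ι : Type*} [DivisionRing K] [AddCommGroup V]
    [Module K V] {v : ι → V} (hv : LinearIndependent K v) (i : ι) :
    Basis.sumExtend hv (.inl i) = v i := by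
  simp only [Basis.sumExtend, Basis.reindex_apply, Basis.coe_extend]
  rfl

namespace Submodule

variable {R M : Type*} [CommRing R] [AddCommGroup M] [Module R M]

theorem eq_top_of_sup_smul_top_eq_top_of_isNilpotent {I : Ideal R} (hI : IsNilpotent I)
    {N : Submodule R M} (h : N ⊔ I • ⊤ = ⊤) : N = ⊤ := by
  obtain ⟨n, hn⟩ := hI
  have key : ∀ k : ℕ, N ⊔ I ^ k • ⊤ = ⊤ := by
    intro k
    induction k with
    | zero => simp
    | succ k ih =>
      calc N ⊔ I ^ (k + 1) • ⊤ = N ⊔ I ^ k • (N ⊔ I • ⊤) := by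
            rw [smul_sup, ← sup_assoc, sup_eq_left.mpr (smul_le_right : I ^ k • N ≤ N),
              ← mul_smul, ← pow_succ]
        _ = ⊤ := by rw [h, ih]
  simpa [hn] using key n

end Submodule

universe u v

namespace IsLocalRing

variable {R : Type u} {M : Type v} [CommRing R] [IsLocalRing R] [AddCommGroup M] [Module R M]

local notation "k" => ResidueField R
local notation "𝔪" => maximalIdeal R

theorem span_eq_top_of_tmul_eq_basis_of_isNilpotent (hm : IsNilpotent 𝔪) {ι : Type*}
    (v : ι → M) (b : Basis ι k (k ⊗[R] M)) (hb : ∀ i, 1 ⊗ₜ v i = b i) :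
    Submodule.span R (Set.range v) = ⊤ := by
  have hmap : (Submodule.span R (Set.range v)).map (TensorProduct.mk R k M 1) = ⊤ := by
    rw [Submodule.map_span, ← Submodule.restrictScalars_span R k Ideal.Quotient.mk_surjective,
      Submodule.restrictScalars_eq_top_iff, ← b.span_eq, ← Set.range_comp]
    simp only [Function.comp_def, mk_apply, hb]
  refine Submodule.eq_top_of_sup_smul_top_eq_top_of_isNilpotent hm ?_
  have := Submodule.comap_map_eq (TensorProduct.mk R k M 1) (Submodule.span R (Set.range v))
  -- stated separately since `k` is `R ⧸ 𝔪` only after unfolding `ResidueField`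
  have hker : LinearMap.ker (TensorProduct.mk R k M 1) = 𝔪 • ⊤ :=
    LinearMap.ker_tensorProductMk M
  rwa [hmap, Submodule.comap_top, hker, eq_comm] at this

variable [Flat R M]

noncomputable def basisOfTmulEqBasis (hm : IsNilpotent 𝔪) {ι : Type*} (v : ι → M)
    (b : Basis ι k (k ⊗[R] M)) (hb : ∀ i, 1 ⊗ₜ v i = b i) : Basis ι R M :=
  .mk (IsLocalRing.linearIndependent_of_flat v <| by
      simpa [Function.comp_def, hb] using b.linearIndependent)
    (span_eq_top_of_tmul_eq_basis_of_isNilpotent hm v b hb).ge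

@[simp]
theorem coe_basisOfTmulEqBasis (hm : IsNilpotent 𝔪) {ι : Type*} (v : ι → M)
    (b : Basis ι k (k ⊗[R] M)) (hb : ∀ i, 1 ⊗ₜ v i = b i) :
    ⇑(basisOfTmulEqBasis hm v b hb) = v :=
  Basis.coe_mk ..

theorem free_of_flat_of_isNilpotent (hm : IsNilpotent 𝔪) : Free R M :=
  let b := Free.chooseBasis k (k ⊗[R] M)
  have ⟨v, hv⟩ := (TensorProduct.mk_surjective R M k Ideal.Quotient.mk_surjective).comp_left b
  .of_basis (basisOfTmulEqBasis hm v b (congr_fun hv))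

theorem exists_basis_apply_inl_of_flat (hm : IsNilpotent 𝔪) {ι : Type*} (v : ι → M)
    (hv : LinearIndependent k (TensorProduct.mk R k M 1 ∘ v)) :
    ∃ (κ : Type max u v) (b : Basis (ι ⊕ κ) R M), ∀ i, b (.inl i) = v i := by
  let c := Basis.sumExtend hv
  obtain ⟨w, hw⟩ := (TensorProduct.mk_surjective R M k Ideal.Quotient.mk_surjective).comp_left
    (c ∘ .inr)
  have hc : ∀ s, 1 ⊗ₜ Sum.elim v w s = c s := by
    rintro (i | j)
    · exact (Basis.sumExtend_apply_inl hv i).symm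
    · exact congr_fun hw j
  exact ⟨_, basisOfTmulEqBasis hm _ c hc, fun i => by simp⟩

end IsLocalRing

namespace LinearMap

variable {R F G ι κ : Type*} [CommRing R] [AddCommGroup F] [Module R F] [AddCommGroup G]
  [Module R G] {u : F →ₗ[R] G} {bF : Basis ι R F} {bG : Basis (ι ⊕ κ) R G}

theorem injective_of_map_basis_eq_inl (hu : ∀ i, u (bF i) = bG (.inl i)) : Injective u :=
  u.injective_of_linearIndependent bF.span_eq <| by
    simpa [Function.comp_def, hu] using bG.linearIndependent.comp _ Sum.inl_injective

theorem exact_of_map_basis_eq_inl (hu : ∀ i, u (bF i) = bG (.inl i)) :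
    Exact u
      (snd R _ _ ∘ₗ (bG.repr ≪≫ₗ Finsupp.sumFinsuppLEquivProdFinsupp R).toLinearMap) := by
  refine (Exact.iff_of_ladder_linearEquiv (e₁ := bF.repr)
    (e₂ := bG.repr ≪≫ₗ Finsupp.sumFinsuppLEquivProdFinsupp R) (e₃ := .refl R _)
    (g₁₂ := inl R _ _) (g₂₃ := snd R _ _) ?_ rfl).mp Exact.inl_snd
  refine bF.ext fun i => ?_
  ext j <;> simp [hu]

theorem free_quotient_range_of_map_basis_eq_inl (hu : ∀ i, u (bF i) = bG (.inl i)) :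
    Free R (G ⧸ range u) :=
  .of_equiv ((exact_of_map_basis_eq_inl hu).linearEquivOfSurjective
    ((snd_surjective (R := R)).comp (LinearEquiv.surjective _))).symm

end LinearMap

/-- Let `A` be a commutative Artinian local ring with residue field `κ`.
Let `F` and `G` be flat `A`-modules and `u : F → G` an `A`-linear map such that the induced
map `u ⊗ id_κ : F ⊗[A] κ → G ⊗[A] κ` is injective.  Then `u` is injective and the cokernel
of `u` is a flat `A`-module. -/
theorem stmt3 (A : Type*) [CommRing A] [IsArtinianRing A] [IsLocalRing A]
    (F G : Type*) [AddCommGroup F] [Module A F] [AddCommGroup G] [Module A G]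
    [Module.Flat A F] [Module.Flat A G] (u : F →ₗ[A] G)
    (h : Function.Injective (LinearMap.rTensor (IsLocalRing.ResidueField A) u)) :
    Function.Injective u ∧ Module.Flat A (G ⧸ LinearMap.range u) := by
  have hm : IsNilpotent (maximalIdeal A) :=
    (isArtinianRing_iff_isNilpotent_maximalIdeal A).mp inferInstance
  have : Free A F := free_of_flat_of_isNilpotent hm
  let bF := Free.chooseBasis A F
  have hk : Injective (u.baseChange (ResidueField A)) := by
    rwa [LinearMap.baseChange_eq_ltensor, LinearMap.lTensor_inj_iff_rTensor_inj]
  obtain ⟨κ, bG, hbG⟩ := exists_basis_apply_inl_of_flat hm (u ∘ bF) <| by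
    simpa [Function.comp_def] using
      (Algebra.TensorProduct.basis (ResidueField A) bF).linearIndependent.map' _
        (LinearMap.ker_eq_bot.mpr hk)
  have hu : ∀ i, u (bF i) = bG (.inl i) := fun i => (hbG i).symm
  have : Free A (G ⧸ LinearMap.range u) := LinearMap.free_quotient_range_of_map_basis_eq_inl hu
  exact ⟨LinearMap.injective_of_map_basis_eq_inl hu, inferInstance⟩
end

section
/- Let A be a commutative ring, S a commutative A-algebra that is flat as an A-module, t ∈ S a nonzerodivisor such that S/tS is flat as an A-module, and I ⊆ S an ideal such that S/I is flat as an A-module. Then: (a) for every A-module M, multiplication by t on I ⊗_A M is injective; and (b) the A-module I/tI (equivalently, I ⊗_S S/tS) is flat over A. -/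
open TensorProduct

universe u

/-!
An injective `A`-linear map with `A`-flat cokernel stays injective after tensoring with any
`A`-module (`Tor₁` of a flat module vanishes). This applies to `I ⊆ S` and to `t : S → S`, and
`t` on `I` is the restriction of `t` on `S`, which gives (a). From `0 → I → S → S/I → 0` the ideal
`I` is `A`-flat, so `0 → I → I → I/tI → 0` computes `Tor₁(I/tI, -)` from a flat module, and (a)
for `M = A/J` is exactly the ideal-wise `Tor` criterion for flatness of `I/tI`.
-/

section ShortExact

variable {R : Type*} [CommRing R] {K F Q : Type*} [AddCommGroup K] [AddCommGroup F]
  [AddCommGroup Q] [Module R K] [Module R F] [Module R Q] {f : K →ₗ[R] F} {g : F →ₗ[R] Q}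

theorem LinearMap.rTensor_injective_of_exact_of_flat [Module.Flat R Q]
    (hf : Function.Injective f) (hfg : Function.Exact f g) (hg : Function.Surjective g)
    (M : Type*) [AddCommGroup M] [Module R M] : Function.Injective (f.rTensor M) :=
  (f.lTensor_inj_iff_rTensor_inj M).1 (g.lTensor_injective_of_exact_of_flat hg f hf hfg M)

theorem Module.Flat.of_exact_of_flat_of_flat [Module.Flat R F] [Module.Flat R Q]
    (hf : Function.Injective f) (hfg : Function.Exact f g) (hg : Function.Surjective g) :
    Module.Flat R K := by
  refine Module.Flat.iff_lTensor_preserves_injective_linearMap.2 fun N N' _ _ _ _ i hi => ?_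
  have hsq : f.rTensor N' ∘ₗ i.lTensor K = i.lTensor F ∘ₗ f.rTensor N := by
    rw [LinearMap.rTensor_comp_lTensor, LinearMap.lTensor_comp_rTensor]
  have hinj : Function.Injective (i.lTensor F ∘ₗ f.rTensor N) :=
    (Module.Flat.lTensor_preserves_injective_linearMap i hi).comp
      (f.rTensor_injective_of_exact_of_flat hf hfg hg N)
  rw [← hsq, LinearMap.coe_comp] at hinj
  exact hinj.of_comp

/-- `hTor` says `Tor₁(Q, R ⧸ J) = 0`, computed from the flat module `F`. -/
theorem Module.Flat.of_exact_of_rTensor_quotient_injective [Module.Flat R F]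
    (hfg : Function.Exact f g) (hg : Function.Surjective g)
    (hTor : ∀ J : Ideal R, Function.Injective (f.rTensor (R ⧸ J))) : Module.Flat R Q := by
  refine Module.Flat.iff_rTensor_injective'.2 fun J => (injective_iff_map_eq_zero _).2 ?_
  intro x hx
  obtain ⟨y, rfl⟩ := LinearMap.lTensor_surjective J hg x
  obtain ⟨z, hz⟩ : J.subtype.rTensor F y ∈ LinearMap.range (f.lTensor R) := by
    refine (_root_.lTensor_exact R hfg hg _).1 ?_
    rw [← LinearMap.comp_apply, LinearMap.lTensor_comp_rTensor, ← LinearMap.rTensor_comp_lTensor,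
      LinearMap.comp_apply, hx]
  obtain ⟨w, hw⟩ : z ∈ LinearMap.range (J.subtype.rTensor K) := by
    refine (_root_.rTensor_exact K (LinearMap.exact_subtype_mkQ J) J.mkQ_surjective _).1 ?_
    apply (f.lTensor_inj_iff_rTensor_inj (R ⧸ J)).2 (hTor J)
    rw [map_zero, ← LinearMap.comp_apply, LinearMap.lTensor_comp_rTensor,
      ← LinearMap.rTensor_comp_lTensor, LinearMap.comp_apply, hz, ← LinearMap.rTensor_comp_apply,
      (LinearMap.exact_subtype_mkQ J).linearMap_comp_eq_zero, LinearMap.rTensor_zero,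
      LinearMap.zero_apply]
  have hwy : f.lTensor J w = y := by
    apply Module.Flat.rTensor_preserves_injective_linearMap J.subtype J.injective_subtype
    rw [← LinearMap.comp_apply, LinearMap.rTensor_comp_lTensor, ← LinearMap.lTensor_comp_rTensor,
      LinearMap.comp_apply, hw, hz]
  rw [← hwy, ← LinearMap.lTensor_comp_apply, hfg.linearMap_comp_eq_zero, LinearMap.lTensor_zero,
    LinearMap.zero_apply]

end ShortExact

section Algebra

variable (A : Type*) {S : Type*} [CommRing A] [CommRing S] [Algebra A S]

theorem Ideal.rTensor_subtype_injective_of_flat_quotient (I : Ideal S) [Module.Flat A (S ⧸ I)]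
    (M : Type*) [AddCommGroup M] [Module A M] :
    Function.Injective ((I.subtype.restrictScalars A).rTensor M) :=
  LinearMap.rTensor_injective_of_exact_of_flat (g := I.mkQ.restrictScalars A) I.injective_subtype
    (LinearMap.exact_subtype_mkQ I) I.mkQ_surjective M

theorem Ideal.flat_of_flat_quotient [Module.Flat A S] (I : Ideal S) [Module.Flat A (S ⧸ I)] :
    Module.Flat A I :=
  Module.Flat.of_exact_of_flat_of_flat (f := I.subtype.restrictScalars A)
    (g := I.mkQ.restrictScalars A) I.injective_subtype
    (LinearMap.exact_subtype_mkQ I) I.mkQ_surjective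

theorem rTensor_lsmul_injective_of_flat_quotient_span_singleton {t : S}
    (ht : t ∈ nonZeroDivisors S) [Module.Flat A (S ⧸ Ideal.span {t})]
    (M : Type*) [AddCommGroup M] [Module A M] :
    Function.Injective (((LinearMap.lsmul S S t).restrictScalars A).rTensor M) := by
  have hexact : Function.Exact ((LinearMap.lsmul S S t).restrictScalars A)
      ((Ideal.span {t}).mkQ.restrictScalars A) := by
    have := LinearMap.exact_lsmul_mkQ_smul_top S t
    rwa [← Submodule.ideal_span_singleton_smul, smul_eq_mul, Ideal.mul_top] at this
  exact LinearMap.rTensor_injective_of_exact_of_flat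
    (fun _ _ => (mul_cancel_left_mem_nonZeroDivisors ht).1) hexact
    (Ideal.span {t}).mkQ_surjective M

theorem Ideal.rTensor_lsmul_injective_of_flat_quotient {t : S} (ht : t ∈ nonZeroDivisors S)
    [Module.Flat A (S ⧸ Ideal.span {t})] (I : Ideal S) [Module.Flat A (S ⧸ I)]
    (M : Type*) [AddCommGroup M] [Module A M] :
    Function.Injective (((LinearMap.lsmul S I t).restrictScalars A).rTensor M) := by
  have hsq : I.subtype.restrictScalars A ∘ₗ (LinearMap.lsmul S I t).restrictScalars A =
      (LinearMap.lsmul S S t).restrictScalars A ∘ₗ I.subtype.restrictScalars A := rfl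
  have h := (rTensor_lsmul_injective_of_flat_quotient_span_singleton A ht M).comp
    (I.rTensor_subtype_injective_of_flat_quotient A M)
  rw [← LinearMap.coe_comp, ← LinearMap.rTensor_comp, ← hsq, LinearMap.rTensor_comp,
    LinearMap.coe_comp] at h
  exact h.of_comp

end Algebra

/-- Let `A` be a commutative ring, `S` a commutative `A`-algebra that is
flat as an `A`-module, `t ∈ S` a nonzerodivisor such that `S/tS` is flat as an `A`-module,
and `I ⊆ S` an ideal such that `S/I` is flat as an `A`-module.  Then:
(a) for every `A`-module `M`, multiplication by `t` on `I ⊗[A] M` is injective; and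
(b) the `A`-module `I/tI` is flat over `A`. -/
theorem stmt5 (A : Type u) (S : Type u) [CommRing A] [CommRing S] [Algebra A S]
    [Module.Flat A S]
    (t : S) (ht : t ∈ nonZeroDivisors S)
    [Module.Flat A (S ⧸ Ideal.span {t})]
    (I : Ideal S) [Module.Flat A (S ⧸ I)] :
    (∀ (M : Type u) [AddCommGroup M] [Module A M],
        Function.Injective
          (LinearMap.rTensor M ((LinearMap.lsmul S I t).restrictScalars A))) ∧
      Module.Flat A
        (↥I ⧸ LinearMap.range ((LinearMap.lsmul S I t).restrictScalars A)) := by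
  have := I.flat_of_flat_quotient A
  have htI (M : Type u) [AddCommGroup M] [Module A M] :=
    I.rTensor_lsmul_injective_of_flat_quotient A ht M
  exact ⟨htI, Module.Flat.of_exact_of_rTensor_quotient_injective
    (LinearMap.exact_map_mkQ_range _) (Submodule.mkQ_surjective _) fun J => htI (A ⧸ J)⟩
end

section
/- Let A' be a commutative Artinian local ring with maximal ideal m and residue field κ; let J ⊆ A' be an ideal with m·J = 0 (hence J² = 0); and let A = A'/J. Let R' be a commutative A'-algebra that is flat as an A'-module; set R = R'/JR' and R_κ = R' ⊗_{A'} κ. Let v₁, …, vₙ ∈ R' be elements whose images in R form a regular sequence and whose images in R_κ form a regular sequence. Then v₁, …, vₙ is a regular sequence in R', and R'/(v₁, …, vₙ) is a flat A'-module. -/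
/-!
Let `m` be the maximal ideal of `A'`; it is nilpotent, and the hypothesis on `R'/mR'` says that
`x = v₁` acts injectively on `R'/mR'`. Over the field `A'/m` this injective map splits, so
`x ⊗ T` is injective on `R' ⊗ T` for every `A'`-module `T` killed by `m`, and dévissage along
`T ⊃ mT ⊃ m²T ⊃ ⋯` (each step uses flatness of `R'`) extends this to every `A'`-module `T`.
With `T = A'` this says that `x` is a nonzerodivisor on `R'`; with `T = A'/I` it gives
injectivity of `I ⊗ R'/xR' → R'/xR'`, i.e. flatness of `R'/xR'`. Reduction modulo `m` commutes
with passing to `R'/xR'`, so induction on the length of the sequence finishes the proof.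
-/

open Function LinearMap RingTheory.Sequence
open scoped Pointwise

section LocalFlatness

variable {A : Type*} [CommRing A] {M N : Type*} [AddCommGroup M] [Module A M]
  [AddCommGroup N] [Module A N]

theorem rTensor_mkQ_smul_top_injective (I : Ideal A) {T : Type*} [AddCommGroup T] [Module A T]
    (hT : I ≤ Module.annihilator A T) :
    Injective ((I • ⊤ : Submodule A M).mkQ.rTensor T) := by
  rw [injective_iff_map_eq_zero]
  intro u hu
  obtain ⟨w, rfl⟩ := (rTensor_exact T (exact_subtype_mkQ _) (Submodule.mkQ_surjective _) u).mp hu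
  suffices (I • ⊤ : Submodule A M).subtype.rTensor T = 0 by rw [this, LinearMap.zero_apply]
  refine TensorProduct.ext' fun ⟨y, hy⟩ t => ?_
  induction hy using Submodule.smul_induction_on' with
  | smul a ha z _ =>
    rw [rTensor_tmul, Submodule.subtype_apply, LinearMap.zero_apply, TensorProduct.smul_tmul,
      Module.mem_annihilator.mp (hT ha), TensorProduct.tmul_zero]
  | add y hy z hz hy' hz' =>
    simpa [TensorProduct.add_tmul] using congr($hy' + $hz')

theorem exists_leftInverse_mapQ_smul_top (m : Ideal A) [m.IsMaximal] (f : M →ₗ[A] N)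
    (hf : (m • ⊤ : Submodule A N).comap f ≤ m • ⊤) :
    ∃ r : N ⧸ (m • ⊤ : Submodule A N) →ₗ[A] M ⧸ (m • ⊤ : Submodule A M),
      r ∘ₗ (m • ⊤ : Submodule A M).mapQ _ f (Submodule.smul_top_le_comap_smul_top m f) =
        LinearMap.id := by
  let := Ideal.Quotient.field m
  let fκ := ((m • ⊤ : Submodule A M).mapQ _ f (Submodule.smul_top_le_comap_smul_top m f)
    ).extendScalarsOfSurjective (R := A) (S := A ⧸ m) Ideal.Quotient.mk_surjective
  have hker : ker fκ = ⊥ := by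
    rw [eq_bot_iff]
    change ker ((m • ⊤ : Submodule A M).mapQ _ f (Submodule.smul_top_le_comap_smul_top m f)) ≤ ⊥
    rw [Submodule.ker_mapQ, Submodule.map_le_iff_le_comap, Submodule.comap_bot, Submodule.ker_mkQ]
    exact hf
  obtain ⟨r, hr⟩ := fκ.exists_leftInverse_of_injective hker
  exact ⟨r.restrictScalars A, LinearMap.ext fun y => congr($hr y)⟩

theorem rTensor_injective_of_le_annihilator (m : Ideal A) [m.IsMaximal] (f : M →ₗ[A] N)
    (hf : (m • ⊤ : Submodule A N).comap f ≤ m • ⊤) {T : Type*} [AddCommGroup T] [Module A T]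
    (hT : m ≤ Module.annihilator A T) : Injective (f.rTensor T) := by
  obtain ⟨r, hr⟩ := exists_leftInverse_mapQ_smul_top m f hf
  set f' := (m • ⊤ : Submodule A M).mapQ _ f (Submodule.smul_top_le_comap_smul_top m f)
  have hf' : Injective (f'.rTensor T) :=
    LeftInverse.injective (g := r.rTensor T) fun y => by
      rw [← LinearMap.comp_apply, ← rTensor_comp, hr, rTensor_id, LinearMap.id_apply]
  have hsq : f'.rTensor T ∘ₗ (m • ⊤ : Submodule A M).mkQ.rTensor T =
      (m • ⊤ : Submodule A N).mkQ.rTensor T ∘ₗ f.rTensor T := by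
    rw [← rTensor_comp, ← rTensor_comp, Submodule.mapQ_mkQ]
  refine Injective.of_comp (f := (m • ⊤ : Submodule A N).mkQ.rTensor T) ?_
  rw [← coe_comp, ← hsq, coe_comp]
  exact hf'.comp (rTensor_mkQ_smul_top_injective m hT)

theorem rTensor_injective_of_shortExact [Module.Flat A N] (f : M →ₗ[A] N)
    {T₁ T₂ T₃ : Type*} [AddCommGroup T₁] [Module A T₁] [AddCommGroup T₂] [Module A T₂]
    [AddCommGroup T₃] [Module A T₃] {i : T₁ →ₗ[A] T₂} {p : T₂ →ₗ[A] T₃}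
    (hi : Injective i) (hip : Exact i p) (hp : Surjective p)
    (h₁ : Injective (f.rTensor T₁)) (h₃ : Injective (f.rTensor T₃)) :
    Injective (f.rTensor T₂) := by
  rw [injective_iff_map_eq_zero]
  intro u hu
  have hpu : f.rTensor T₃ (p.lTensor M u) = 0 := by
    rw [← LinearMap.comp_apply, rTensor_comp_lTensor, ← lTensor_comp_rTensor, LinearMap.comp_apply,
      hu, map_zero]
  obtain ⟨w, rfl⟩ := (lTensor_exact M hip hp u).mp (h₃.eq_iff' (map_zero _) |>.mp hpu)
  have hiw : i.lTensor N (f.rTensor T₁ w) = 0 := by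
    rw [← LinearMap.comp_apply, lTensor_comp_rTensor, ← rTensor_comp_lTensor, LinearMap.comp_apply,
      hu]
  have hw : w = 0 := by
    rwa [(Module.Flat.lTensor_preserves_injective_linearMap i hi).eq_iff' (map_zero _),
      h₁.eq_iff' (map_zero _)] at hiw
  rw [hw, map_zero]

theorem rTensor_injective_of_pow_le_annihilator [Module.Flat A N] (m : Ideal A) [m.IsMaximal]
    (f : M →ₗ[A] N) (hf : (m • ⊤ : Submodule A N).comap f ≤ m • ⊤) (i : ℕ)
    {T : Type*} [AddCommGroup T] [Module A T] (hT : m ^ i ≤ Module.annihilator A T) :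
    Injective (f.rTensor T) := by
  induction i generalizing T with
  | zero =>
    have : Subsingleton T := Module.annihilator_eq_top_iff.mp (top_le_iff.mp (by simpa using hT))
    exact injective_of_subsingleton _
  | succ i ih =>
    refine rTensor_injective_of_shortExact f (m • ⊤ : Submodule A T).injective_subtype
      (exact_subtype_mkQ _) (Submodule.mkQ_surjective _) (ih ?_)
      (rTensor_injective_of_le_annihilator m f hf ?_)
    · rw [← Submodule.annihilator_top, Submodule.le_annihilator_iff] at hT
      rw [Submodule.le_annihilator_iff, ← Submodule.mul_smul, ← pow_succ, hT]
    · exact (Module.isTorsionBySet_iff_subset_annihilator _ _).mp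
        (Module.isTorsionBySet_quotient_ideal_smul T m)

theorem injective_of_comap_smul_top_le [Module.Flat A N] (m : Ideal A) [m.IsMaximal]
    (hm : IsNilpotent m) (f : M →ₗ[A] N) (hf : (m • ⊤ : Submodule A N).comap f ≤ m • ⊤) :
    Injective f := by
  obtain ⟨k, hk⟩ := hm
  have hA := rTensor_injective_of_pow_le_annihilator m f hf k (T := A) (by simp [hk])
  have hrid : TensorProduct.rid A N ∘ₗ f.rTensor A = f ∘ₗ TensorProduct.rid A M :=
    TensorProduct.ext' fun y a => by simp
  have hcomp : Injective (f ∘ₗ (TensorProduct.rid A M).toLinearMap) := by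
    rw [← hrid, coe_comp]
    exact (TensorProduct.rid A N).injective.comp hA
  exact (EquivLike.injective_comp (TensorProduct.rid A M) f).mp hcomp

theorem flat_of_exact_of_comap_smul_top_le [Module.Flat A N] (m : Ideal A) [m.IsMaximal]
    (hm : IsNilpotent m) (f : M →ₗ[A] N) (hf : (m • ⊤ : Submodule A N).comap f ≤ m • ⊤)
    {Q : Type*} [AddCommGroup Q] [Module A Q] {p : N →ₗ[A] Q} (hfp : Exact f p)
    (hp : Surjective p) : Module.Flat A Q := by
  obtain ⟨k, hk⟩ := hm
  refine Module.Flat.iff_lTensor_injective'.mpr fun I => ?_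
  exact lTensor_injective_of_exact_of_exact_of_rTensor_injective hfp hp (exact_subtype_mkQ I)
    (Submodule.mkQ_surjective I)
    (rTensor_injective_of_pow_le_annihilator m f hf k (by simp [hk]))
    (Module.Flat.lTensor_preserves_injective_linearMap _ I.injective_subtype)

end LocalFlatness

namespace RingTheory.Sequence

theorem isRegular_map_algebraMap_iff {R : Type*} (S M : Type*) [CommRing R] [CommRing S]
    [Algebra R S] [AddCommGroup M] [Module R M] [Module S M] [IsScalarTower R S M] (rs : List R) :
    IsRegular M (rs.map (algebraMap R S)) ↔ IsRegular M rs := by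
  rw [isRegular_iff, isRegular_iff, isWeaklyRegular_map_algebraMap_iff,
    ← (Submodule.restrictScalars_injective R S M).ne_iff, ← Ideal.map_ofList,
    Ideal.smul_restrictScalars, Submodule.restrictScalars_top]

end RingTheory.Sequence

section RegularSequence

variable {A R M : Type*} [CommRing A] [CommRing R] [Algebra A R] [AddCommGroup M] [Module R M]
  [Module A M] [IsScalarTower A R M]

def quotSMulTopQuotEquivQuotQuotSMulTop (x : R) (I : Ideal R) :
    QuotSMulTop x (M ⧸ (I • ⊤ : Submodule R M)) ≃ₗ[R]
      QuotSMulTop x M ⧸ (I • ⊤ : Submodule R (QuotSMulTop x M)) :=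
  Submodule.quotEquivOfEq _ _ (by rw [Submodule.map_pointwise_smul, Submodule.map_top,
      Submodule.range_mkQ]) ≪≫ₗ
    Submodule.quotientQuotientEquivQuotientSup (I • ⊤) (x • ⊤) ≪≫ₗ
    Submodule.quotEquivOfEq _ _ (sup_comm _ _) ≪≫ₗ
    (Submodule.quotientQuotientEquivQuotientSup (x • ⊤) (I • ⊤)).symm ≪≫ₗ
    Submodule.quotEquivOfEq _ _ (by rw [Submodule.map_smul'', Submodule.map_top,
      Submodule.range_mkQ])

theorem comap_lsmul_smul_top_le (I : Ideal A) {x : R}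
    (hx : IsSMulRegular (M ⧸ (I.map (algebraMap A R) • ⊤ : Submodule R M)) x) :
    (I • ⊤ : Submodule A M).comap ((LinearMap.lsmul R M x).restrictScalars A) ≤ I • ⊤ := by
  have hmem (z : M) :
      z ∈ (I.map (algebraMap A R) • ⊤ : Submodule R M) ↔ z ∈ (I • ⊤ : Submodule A M) := by
    rw [← Submodule.restrictScalars_mem A, Ideal.smul_restrictScalars,
      Submodule.restrictScalars_top]
  exact fun y hy => (hmem y).mp (mem_of_isSMulRegular_quotient_of_smul_mem hx ((hmem _).mpr hy))

theorem isSMulRegular_and_flat_quotSMulTop [Module.Flat A M] (m : Ideal A) [m.IsMaximal]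
    (hm : IsNilpotent m) {x : R}
    (hx : IsSMulRegular (M ⧸ (m.map (algebraMap A R) • ⊤ : Submodule R M)) x) :
    IsSMulRegular M x ∧ Module.Flat A (QuotSMulTop x M) := by
  have hx' := comap_lsmul_smul_top_le m hx
  have hexact : Exact ((LinearMap.lsmul R M x).restrictScalars A)
      ((x • ⊤ : Submodule R M).mkQ.restrictScalars A) :=
    exact_lsmul_mkQ_smul_top M x
  exact ⟨injective_of_comap_smul_top_le m hm _ hx',
    flat_of_exact_of_comap_smul_top_le m hm _ hx' hexact
      (Submodule.mkQ_surjective (x • ⊤ : Submodule R M))⟩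

theorem isWeaklyRegular_and_flat_of_isWeaklyRegular_quotient [Module.Flat A M] (m : Ideal A)
    [m.IsMaximal] (hm : IsNilpotent m) {rs : List R}
    (h : IsWeaklyRegular (M ⧸ (m.map (algebraMap A R) • ⊤ : Submodule R M)) rs) :
    IsWeaklyRegular M rs ∧ Module.Flat A (M ⧸ (Ideal.ofList rs • ⊤ : Submodule R M)) := by
  induction rs generalizing M with
  | nil =>
    refine ⟨.nil R M, ?_⟩
    rw [Ideal.ofList_nil, Submodule.bot_smul]
    exact (Module.Flat.equiv_iff ((Submodule.quotEquivOfEqBot ⊥ rfl).restrictScalars A)).mpr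
      inferInstance
  | cons x rs ih =>
    obtain ⟨hx, hrs⟩ := (isWeaklyRegular_cons_iff _ x rs).mp h
    obtain ⟨hxM, _⟩ := isSMulRegular_and_flat_quotSMulTop m hm hx
    obtain ⟨hrsM, hflat⟩ :=
      ih (((quotSMulTopQuotEquivQuotQuotSMulTop x _).isWeaklyRegular_congr rs).mp hrs)
    exact ⟨(isWeaklyRegular_cons_iff M x rs).mpr ⟨hxM, hrsM⟩,
      (Module.Flat.equiv_iff
        ((Submodule.quotOfListConsSMulTopEquivQuotSMulTopInner M x rs).restrictScalars A)).mpr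
        hflat⟩

theorem isRegular_and_flat_of_isRegular_quotient [Module.Flat A M] (m : Ideal A)
    [m.IsMaximal] (hm : IsNilpotent m) {rs : List R}
    (h : IsRegular (M ⧸ (m.map (algebraMap A R) • ⊤ : Submodule R M)) rs) :
    IsRegular M rs ∧ Module.Flat A (M ⧸ (Ideal.ofList rs • ⊤ : Submodule R M)) := by
  obtain ⟨hreg, hflat⟩ :=
    isWeaklyRegular_and_flat_of_isWeaklyRegular_quotient m hm h.toIsWeaklyRegular
  refine ⟨⟨hreg, fun htop => h.top_ne_smul ?_⟩, hflat⟩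
  have := congrArg (Submodule.map (m.map (algebraMap A R) • ⊤ : Submodule R M).mkQ) htop
  rwa [Submodule.map_smul'', Submodule.map_top, Submodule.range_mkQ] at this

end RegularSequence

theorem stmt7_general (A' : Type*) [CommRing A'] [IsArtinianRing A'] [IsLocalRing A']
    (R' : Type*) [CommRing R'] [Algebra A' R'] [Module.Flat A' R']
    (n : ℕ) (v : Fin n → R')
    (hκ : RingTheory.Sequence.IsRegular
      (R' ⧸ Ideal.map (algebraMap A' R') (IsLocalRing.maximalIdeal A'))
      (List.ofFn fun i =>
        Ideal.Quotient.mk (Ideal.map (algebraMap A' R') (IsLocalRing.maximalIdeal A')) (v i))) :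
    RingTheory.Sequence.IsRegular R' (List.ofFn v) ∧
      Module.Flat A' (R' ⧸ Ideal.span (Set.range v)) := by
  set m := IsLocalRing.maximalIdeal A'
  have hm : IsNilpotent m := (isArtinianRing_iff_isNilpotent_maximalIdeal A').mp inferInstance
  have hsmul : (m.map (algebraMap A' R') • ⊤ : Submodule R' R') = m.map (algebraMap A' R') :=
    Ideal.mul_top _
  have hκ' : IsRegular (R' ⧸ (m.map (algebraMap A' R') • ⊤ : Submodule R' R')) (List.ofFn v) := by
    rw [hsmul, ← isRegular_map_algebraMap_iff (R' ⧸ m.map (algebraMap A' R')), List.map_ofFn]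
    exact hκ
  have hspan : Ideal.ofList (List.ofFn v) = Ideal.span (Set.range v) :=
    congrArg Ideal.span (Set.ext fun _ => List.mem_ofFn)
  obtain ⟨hreg, hflat⟩ := isRegular_and_flat_of_isRegular_quotient m hm hκ'
  rw [smul_eq_mul, Ideal.mul_top, hspan] at hflat
  exact ⟨hreg, hflat⟩

/-- Let `A'` be a commutative Artinian local ring with maximal ideal `m`
and residue field `κ`; let `J ⊆ A'` be an ideal with `m·J = 0`; and let `A = A'/J`.  Let
`R'` be a commutative `A'`-algebra that is flat as an `A'`-module; set `R = R'/JR'` and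
`R_κ = R' ⊗[A'] κ = R'/mR'`.  Let `v₁, …, vₙ ∈ R'` be elements whose images in `R` form a
regular sequence and whose images in `R_κ` form a regular sequence.  Then `v₁, …, vₙ` is a
regular sequence in `R'`, and `R'/(v₁, …, vₙ)` is a flat `A'`-module. -/
theorem stmt7 (A' : Type*) [CommRing A'] [IsArtinianRing A'] [IsLocalRing A']
    (J : Ideal A') (hJ : IsLocalRing.maximalIdeal A' * J = ⊥)
    (R' : Type*) [CommRing R'] [Algebra A' R'] [Module.Flat A' R']
    (n : ℕ) (v : Fin n → R')
    (hR : RingTheory.Sequence.IsRegular (R' ⧸ Ideal.map (algebraMap A' R') J)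
      (List.ofFn fun i => Ideal.Quotient.mk (Ideal.map (algebraMap A' R') J) (v i)))
    (hκ : RingTheory.Sequence.IsRegular
      (R' ⧸ Ideal.map (algebraMap A' R') (IsLocalRing.maximalIdeal A'))
      (List.ofFn fun i =>
        Ideal.Quotient.mk (Ideal.map (algebraMap A' R') (IsLocalRing.maximalIdeal A')) (v i))) :
    RingTheory.Sequence.IsRegular R' (List.ofFn v) ∧
      Module.Flat A' (R' ⧸ Ideal.span (Set.range v)) :=
  stmt7_general A' R' n v hκ
end

section
/- Let R be a commutative ring, J ⊆ R an ideal, and t ∈ R an element whose image in R/J is a nonzerodivisor. Then J ∩ tR = tJ, and the natural ring homomorphism R/(tJ) → (R/J) ×_{R/(J + tR)} (R/tR), induced by the two quotient maps, is an isomorphism onto the fiber product. -/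
/-!
If `r t ∈ J` then `r ∈ J`, because `t` is a nonzerodivisor modulo `J`; hence `J ∩ tR = tJ`.
The map `R → R/J × R/tR` therefore has kernel `tJ`, and its image is the fiber product over
`R/(J + tR)`: if `a ≡ b` modulo `J + tR`, say `a - b = j + s`, then `a - j` lifts `(a, b)`.
-/

namespace Ideal

variable {R : Type*} [CommRing R]

theorem inf_span_singleton_eq_span_singleton_mul {J : Ideal R} {t : R}
    (ht : Quotient.mk J t ∈ nonZeroDivisors (R ⧸ J)) : J ⊓ span {t} = span {t} * J := by
  refine le_antisymm ?_ (mul_le_inf.trans_eq (inf_comm _ _))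
  rintro _ ⟨hJ, ht'⟩
  obtain ⟨r, rfl⟩ := mem_span_singleton'.mp ht'
  have hr : r ∈ J := by
    rw [← Quotient.eq_zero_iff_mem]
    exact ht.2 _ (by rw [← map_mul, Quotient.eq_zero_iff_mem]; exact hJ)
  exact mul_comm t r ▸ mul_mem_mul (mem_span_singleton_self t) hr

theorem ker_quotientMk_prod (I J : Ideal R) :
    RingHom.ker ((Quotient.mk I).prod (Quotient.mk J)) = I ⊓ J := by
  ext r
  simp [RingHom.mem_ker, Prod.mk_eq_zero, Quotient.eq_zero_iff_mem]

theorem mem_range_quotientMk_prod_iff (I J : Ideal R) (x : (R ⧸ I) × (R ⧸ J)) :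
    x ∈ Set.range ((Quotient.mk I).prod (Quotient.mk J)) ↔
      Quotient.factor (le_sup_left : I ≤ I ⊔ J) x.1 =
        Quotient.factor (le_sup_right : J ≤ I ⊔ J) x.2 := by
  obtain ⟨x₁, x₂⟩ := x
  obtain ⟨a, rfl⟩ := Quotient.mk_surjective x₁
  obtain ⟨b, rfl⟩ := Quotient.mk_surjective x₂
  simp only [Quotient.factor_mk, Quotient.eq]
  constructor
  · rintro ⟨r, hr⟩
    obtain ⟨hra, hrb⟩ := Prod.ext_iff.mp hr
    rw [RingHom.prod_apply, Quotient.eq] at hra hrb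
    simpa using add_mem (mem_sup_left (I.neg_mem hra)) (mem_sup_right hrb)
  · intro hab
    obtain ⟨i, hi, j, hj, hij⟩ := Submodule.mem_sup.mp hab
    refine ⟨a - i, Prod.ext ?_ ?_⟩
    · simpa [← map_sub, Quotient.eq] using I.neg_mem hi
    · have hlift : a - i - b = j := by linear_combination -hij
      simpa [← map_sub, Quotient.eq, hlift] using hj

end Ideal

/-- Let `R` be a commutative ring, `J ⊆ R` an ideal, and `t ∈ R` an
element whose image in `R/J` is a nonzerodivisor.  Then `J ∩ tR = tJ`, and the natural
ring homomorphism `R/(tJ) → (R/J) ×_{R/(J + tR)} (R/tR)` induced by the two quotient maps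
is an isomorphism onto the fiber product, i.e. it is injective with image exactly the
pairs having the same image in `R/(J + tR)`. -/
theorem stmt9 (R : Type*) [CommRing R] (J : Ideal R) (t : R)
    (ht : Ideal.Quotient.mk J t ∈ nonZeroDivisors (R ⧸ J)) :
    J ⊓ Ideal.span {t} = Ideal.span {t} * J ∧
    ∃ f : R ⧸ (Ideal.span {t} * J) →+* (R ⧸ J) × (R ⧸ Ideal.span {t}),
      (∀ r : R, f (Ideal.Quotient.mk (Ideal.span {t} * J) r) =
        (Ideal.Quotient.mk J r, Ideal.Quotient.mk (Ideal.span {t}) r)) ∧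
      Function.Injective f ∧
      ∀ x : (R ⧸ J) × (R ⧸ Ideal.span {t}),
        x ∈ Set.range f ↔
          Ideal.Quotient.factor (S := J) (T := J ⊔ Ideal.span {t}) le_sup_left x.1 =
            Ideal.Quotient.factor (S := Ideal.span {t}) (T := J ⊔ Ideal.span {t}) le_sup_right x.2 := by
  have hcap := Ideal.inf_span_singleton_eq_span_singleton_mul ht
  set g := (Ideal.Quotient.mk J).prod (Ideal.Quotient.mk (Ideal.span {t}))
  have hker : RingHom.ker g = Ideal.span {t} * J := (Ideal.ker_quotientMk_prod _ _).trans hcap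
  have hg : ∀ a ∈ Ideal.span {t} * J, g a = 0 := fun a ha => hker.ge ha
  refine ⟨hcap, Ideal.Quotient.lift _ g hg, fun _ => rfl,
    RingHom.lift_injective_of_ker_le_ideal _ hg hker.le, fun x => ?_⟩
  rw [← Ideal.Quotient.mk_surjective.range_comp]
  exact Ideal.mem_range_quotientMk_prod_iff _ _ x
end
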